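/- arXiv:2007.09951 — 2 statements merged into one kernel-verified Lean document; each statement's English description precedes it below -/
import Mathlib

section
/- Let $n \geq 1$, $(\bar c_{ij})$ symmetric nonnegative reals, $c^* > 0$, and $v \in (\mathbb{R}_{>0})^n$. Define $B(v) = c^* M^{-1}(v) + M^{-1}(v) \bar A(v)$ where $M(v) = \mathrm{diag}(v)$ and $\bar A$ as above. Then $B(v)$ is symmetric positive definite, and in particular invertible. -/
/-!
Write `M = diag v`. Then `Ā = L M⁻¹`, where `L` is the Laplacian of the graph with the symmetric
nonnegative edge weights `w i j = c i j * v i * v j`. Since `2 xᵀ L x = ∑ i j, w i j (x i - x j)²`,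
the matrix `L` is positive semidefinite, hence so is its congruence `M⁻¹ Ā = M⁻¹ L M⁻¹`,
and adding the positive definite `c* M⁻¹` gives a positive definite `B`.
-/

open Matrix

namespace Matrix

variable {ι R : Type*} [Fintype ι] [DecidableEq ι]

def weightedLaplacian [Ring R] (w : ι → ι → R) : Matrix ι ι R :=
  diagonal (fun i => ∑ j, w i j) - of w

theorem dotProduct_weightedLaplacian_mulVec [CommRing R] (w : ι → ι → R) (x : ι → R) :
    x ⬝ᵥ (weightedLaplacian w *ᵥ x) = ∑ i, ∑ j, w i j * (x i ^ 2 - x i * x j) := by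
  have hdiag : (diagonal fun i => ∑ j, w i j) *ᵥ x = fun i => (∑ j, w i j) * x i :=
    funext fun _ => mulVec_diagonal _ _ _
  rw [weightedLaplacian, sub_mulVec, dotProduct_sub, hdiag]
  simp only [dotProduct, mulVec, of_apply, Finset.mul_sum, Finset.sum_mul,
    ← Finset.sum_sub_distrib]
  exact Finset.sum_congr rfl fun i _ => Finset.sum_congr rfl fun j _ => by ring

theorem two_mul_dotProduct_weightedLaplacian_mulVec [CommRing R] {w : ι → ι → R}
    (hw : ∀ i j, w i j = w j i) (x : ι → R) :
    2 * (x ⬝ᵥ (weightedLaplacian w *ᵥ x)) = ∑ i, ∑ j, w i j * (x i - x j) ^ 2 := by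
  have hswap : ∑ i, ∑ j, w i j * (x i ^ 2 - x i * x j) =
      ∑ i, ∑ j, w i j * (x j ^ 2 - x j * x i) := by
    rw [Finset.sum_comm]; simp_rw [hw]
  rw [two_mul, dotProduct_weightedLaplacian_mulVec]
  nth_rw 2 [hswap]
  rw [← Finset.sum_add_distrib]; refine Finset.sum_congr rfl fun i _ => ?_
  rw [← Finset.sum_add_distrib]; refine Finset.sum_congr rfl fun j _ => ?_
  ring

theorem isHermitian_weightedLaplacian [CommRing R] [StarRing R] [TrivialStar R]
    {w : ι → ι → R} (hw : ∀ i j, w i j = w j i) : (weightedLaplacian w).IsHermitian := by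
  ext i j
  by_cases h : i = j
  · subst h; simp [weightedLaplacian]
  · simp [weightedLaplacian, h, Ne.symm h, hw i j]

theorem posSemidef_weightedLaplacian [Field R] [LinearOrder R] [IsStrictOrderedRing R]
    [StarRing R] [TrivialStar R] {w : ι → ι → R} (hw : ∀ i j, w i j = w j i)
    (hw0 : ∀ i j, i ≠ j → 0 ≤ w i j) : (weightedLaplacian w).PosSemidef := by
  refine .of_dotProduct_mulVec_nonneg (isHermitian_weightedLaplacian hw) fun x => ?_
  have hform := two_mul_dotProduct_weightedLaplacian_mulVec hw x
  have hsum : 0 ≤ ∑ i, ∑ j, w i j * (x i - x j) ^ 2 := by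
    refine Finset.sum_nonneg fun i _ => Finset.sum_nonneg fun j _ => ?_
    rcases eq_or_ne i j with rfl | h
    · simp
    · exact mul_nonneg (hw0 i j h) (sq_nonneg _)
  rw [star_trivial]
  linarith

theorem weightedLaplacian_mul_inv_diagonal [Field R] (c : ι → ι → R) {v : ι → R}
    (hv : ∀ i, v i ≠ 0) :
    weightedLaplacian (fun i j => c i j * v i * v j) * (diagonal v)⁻¹ = of fun i j =>
      if i = j then ∑ k, (if k = i then 0 else c i k * v k) else -(c i j * v i) := by
  have hinv : (diagonal v)⁻¹ = diagonal fun i => (v i)⁻¹ :=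
    inv_eq_right_inv <| by simp [diagonal_mul_diagonal, hv]
  ext i j
  rw [hinv, mul_diagonal, weightedLaplacian, sub_apply, diagonal_apply, of_apply, of_apply]
  split_ifs with hij
  · subst hij
    rw [← Finset.add_sum_erase _ _ (Finset.mem_univ i),
      ← Finset.add_sum_erase _ _ (Finset.mem_univ i), if_pos rfl, add_sub_cancel_left, zero_add,
      Finset.sum_mul]
    refine Finset.sum_congr rfl fun k hk => ?_
    rw [if_neg (Finset.ne_of_mem_erase hk), mul_right_comm (c i k), mul_inv_cancel_right₀ (hv i)]
  · rw [zero_sub, neg_mul, mul_inv_cancel_right₀ (hv j)]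

end Matrix

theorem B_posDef_general (n : ℕ) (c : Fin n → Fin n → ℝ)
    (hc0 : ∀ i j, i ≠ j → 0 ≤ c i j) (hcs : ∀ i j, c i j = c j i)
    (cstar : ℝ) (hcstar : 0 < cstar)
    (v : Fin n → ℝ) (hv : ∀ i, 0 < v i) :
    let M : Matrix (Fin n) (Fin n) ℝ := Matrix.diagonal v
    let Abar : Matrix (Fin n) (Fin n) ℝ := Matrix.of fun i j =>
      if i = j then ∑ k, (if k = i then 0 else c i k * v k) else -(c i j * v i)
    let B : Matrix (Fin n) (Fin n) ℝ := cstar • M⁻¹ + M⁻¹ * Abar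
    B.PosDef ∧ IsUnit B := by
  intro M Abar B
  set L := weightedLaplacian fun i j => c i j * v i * v j
  have hL : L.PosSemidef :=
    posSemidef_weightedLaplacian (fun i j => by rw [hcs]; ring)
      fun i j hij => mul_nonneg (mul_nonneg (hc0 i j hij) (hv i).le) (hv j).le
  have hMinv : M⁻¹.PosDef := (posDef_diagonal_iff.2 hv).inv
  have hB : B = cstar • M⁻¹ + (M⁻¹)ᴴ * L * M⁻¹ := by
    rw [hMinv.isHermitian.eq, mul_assoc, weightedLaplacian_mul_inv_diagonal c fun i => (hv i).ne']
  have hBpos : B.PosDef :=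
    hB ▸ (hMinv.smul hcstar).add_posSemidef (hL.conjTranspose_mul_mul_same _)
  exact ⟨hBpos, hBpos.isUnit⟩

theorem B_posDef (n : ℕ) (hn : 1 ≤ n) (c : Fin n → Fin n → ℝ)
    (hc0 : ∀ i j, i ≠ j → 0 ≤ c i j) (hcs : ∀ i j, c i j = c j i)
    (cstar : ℝ) (hcstar : 0 < cstar)
    (v : Fin n → ℝ) (hv : ∀ i, 0 < v i) :
    let M : Matrix (Fin n) (Fin n) ℝ := Matrix.diagonal v
    let Abar : Matrix (Fin n) (Fin n) ℝ := Matrix.of fun i j =>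
      if i = j then ∑ k, (if k = i then 0 else c i k * v k) else -(c i j * v i)
    let B : Matrix (Fin n) (Fin n) ℝ := cstar • M⁻¹ + M⁻¹ * Abar
    B.PosDef ∧ IsUnit B :=
  B_posDef_general n c hc0 hcs cstar hcstar v hv
end

section
/- Let $n \geq 1$, $(c_{ij})_{i\neq j}$ positive symmetric reals, and $v \in (\mathbb{R}_{>0})^n$. Define $A(v)$ by $A_{ii}(v) = \sum_{j\neq i} c_{ij} v_j$ and $A_{ij}(v) = -c_{ij} v_i$ for $i\neq j$. Then $\mathrm{Ker}(A(v)) = \mathrm{Span}\{v\}$ and $\mathrm{Ran}(A(v)) = \mathcal{V}_0 := \{z \in \mathbb{R}^n : \sum_i z_i = 0\}$. -/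
/-! Writing `(A x)_i = ∑_j c_ij (v_j x_i - v_i x_j)`, the vector `v` is in the kernel, and for
symmetric `c` the double sum of these antisymmetric terms vanishes, so the range lies in `𝒱₀`.
Conversely, if `A x = 0`, at an index `i` maximising `x_j / v_j` every summand of `(A x)_i` is
nonnegative, hence zero, which forces `x` to be proportional to `v`. A one-dimensional kernel
makes the range a hyperplane contained in the hyperplane `𝒱₀`, so the two coincide. -/

open Finset Matrix Module

namespace LinearMap

variable {K V : Type*} [Field K] [AddCommGroup V] [Module K V] [FiniteDimensional K V]

theorem range_eq_ker_of_le_of_finrank_ker_eq_one {A : V →ₗ[K] V} {f : Dual K V} (hf : f ≠ 0)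
    (hle : range A ≤ ker f) (hA : finrank K (ker A) = 1) : range A = ker f := by
  refine Submodule.eq_of_le_of_finrank_eq hle ?_
  have hrank := A.finrank_range_add_finrank_ker
  have hf_rank := Dual.finrank_ker_add_one_of_ne_zero hf
  omega

end LinearMap

section StefanMaxwell

variable {ι : Type*} [Fintype ι] [DecidableEq ι]

def stefanMaxwellMatrix {R : Type*} [CommRing R] (c : ι → ι → R) (v : ι → R) : Matrix ι ι R :=
  Matrix.of fun i j =>
    if i = j then ∑ k, (if k = i then 0 else c i k * v k) else -(c i j * v i)

section CommRing

variable {R : Type*} [CommRing R] (c : ι → ι → R) (v : ι → R)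

theorem stefanMaxwellMatrix_apply (i j : ι) :
    stefanMaxwellMatrix c v i j = (if i = j then ∑ k, c i k * v k else 0) - c i j * v i := by
  rw [stefanMaxwellMatrix, of_apply]
  split_ifs with hij
  · subst hij
    rw [eq_sub_iff_add_eq, ← Fintype.sum_ite_eq' i fun k ↦ c i k * v k, ← Finset.sum_add_distrib]
    exact Finset.sum_congr rfl fun k _ ↦ by split_ifs <;> simp_all
  · rw [zero_sub]

theorem stefanMaxwellMatrix_mulVec_apply (x : ι → R) (i : ι) :
    (stefanMaxwellMatrix c v *ᵥ x) i = ∑ j, c i j * (v j * x i - v i * x j) := by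
  simp only [mulVec, dotProduct, stefanMaxwellMatrix_apply, sub_mul, ite_mul, zero_mul,
    Finset.sum_sub_distrib, Fintype.sum_ite_eq, Finset.sum_mul]
  rw [← Finset.sum_sub_distrib]
  exact Finset.sum_congr rfl fun j _ ↦ by ring

theorem stefanMaxwellMatrix_mulVec_self : stefanMaxwellMatrix c v *ᵥ v = 0 := by
  ext i
  simp [stefanMaxwellMatrix_mulVec_apply, mul_comm]

variable {c} in
theorem sum_stefanMaxwellMatrix_mulVec (hcs : ∀ i j, c i j = c j i) (x : ι → R) :
    ∑ i, (stefanMaxwellMatrix c v *ᵥ x) i = 0 := by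
  simp_rw [stefanMaxwellMatrix_mulVec_apply, mul_sub, Finset.sum_sub_distrib]
  rw [sub_eq_zero, Finset.sum_comm]
  exact Finset.sum_congr rfl fun i _ ↦ Finset.sum_congr rfl fun j _ ↦ by rw [hcs]

end CommRing

section OrderedField

variable {K : Type*} [Field K] [LinearOrder K] [IsStrictOrderedRing K] {c : ι → ι → K}
  {v : ι → K}

theorem exists_eq_smul_of_stefanMaxwellMatrix_mulVec_eq_zero (hc : ∀ i j, i ≠ j → 0 < c i j)
    (hv : ∀ i, 0 < v i) {x : ι → K} (hx : stefanMaxwellMatrix c v *ᵥ x = 0) :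
    ∃ a : K, x = a • v := by
  cases isEmpty_or_nonempty ι
  · exact ⟨0, Subsingleton.elim _ _⟩
  obtain ⟨i, -, hi⟩ := Finset.exists_max_image univ (fun j ↦ x j / v j) univ_nonempty
  have hterm_nonneg : ∀ j ∈ univ, 0 ≤ c i j * (v j * x i - v i * x j) := by
    intro j _
    rcases eq_or_ne i j with rfl | hij
    · simp
    have := (div_le_div_iff₀ (hv j) (hv i)).mp (hi j (mem_univ j))
    exact mul_nonneg (hc i j hij).le (by linarith)
  have hterm_zero := (Finset.sum_eq_zero_iff_of_nonneg hterm_nonneg).mp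
    (by rw [← stefanMaxwellMatrix_mulVec_apply, hx, Pi.zero_apply])
  refine ⟨x i / v i, funext fun j ↦ ?_⟩
  have hcross : v j * x i = v i * x j := by
    rcases eq_or_ne i j with rfl | hij
    · ring
    have := hterm_zero j (mem_univ j)
    rw [mul_eq_zero, sub_eq_zero] at this
    exact this.resolve_left (hc i j hij).ne'
  rw [Pi.smul_apply, smul_eq_mul, div_mul_eq_mul_div, eq_div_iff (hv i).ne']
  linarith

theorem ker_stefanMaxwellMatrix (hc : ∀ i j, i ≠ j → 0 < c i j) (hv : ∀ i, 0 < v i) :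
    LinearMap.ker (stefanMaxwellMatrix c v).mulVecLin = Submodule.span K {v} := by
  refine le_antisymm (fun x hx ↦ ?_) ?_
  · obtain ⟨a, rfl⟩ := exists_eq_smul_of_stefanMaxwellMatrix_mulVec_eq_zero hc hv hx
    exact Submodule.smul_mem _ a (Submodule.mem_span_singleton_self v)
  · rw [Submodule.span_singleton_le_iff_mem]
    exact stefanMaxwellMatrix_mulVec_self c v

end OrderedField

end StefanMaxwell

theorem A_ker_range (n : ℕ) (hn : 1 ≤ n) (c : Fin n → Fin n → ℝ)
    (hc0 : ∀ i j, i ≠ j → 0 < c i j) (hcs : ∀ i j, c i j = c j i)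
    (v : Fin n → ℝ) (hv : ∀ i, 0 < v i) :
    let A : Matrix (Fin n) (Fin n) ℝ := Matrix.of fun i j =>
      if i = j then ∑ k, (if k = i then 0 else c i k * v k) else -(c i j * v i)
    LinearMap.ker A.mulVecLin = Submodule.span ℝ {v} ∧
    LinearMap.range A.mulVecLin =
      LinearMap.ker (∑ i, LinearMap.proj i : (Fin n → ℝ) →ₗ[ℝ] ℝ) := by
  intro A
  change LinearMap.ker (stefanMaxwellMatrix c v).mulVecLin = _ ∧
    LinearMap.range (stefanMaxwellMatrix c v).mulVecLin = _
  have hker := ker_stefanMaxwellMatrix hc0 hv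
  have hsum_apply (x : Fin n → ℝ) :
      (∑ i, LinearMap.proj i : (Fin n → ℝ) →ₗ[ℝ] ℝ) x = ∑ i, x i := by
    simp [LinearMap.sum_apply]
  refine ⟨hker, LinearMap.range_eq_ker_of_le_of_finrank_ker_eq_one ?_ ?_ ?_⟩
  · exact fun h ↦ (Finset.sum_pos (fun i _ ↦ hv i) ⟨⟨0, hn⟩, mem_univ _⟩).ne'
      (by rw [← hsum_apply, h, LinearMap.zero_apply])
  · rintro _ ⟨x, rfl⟩
    rw [LinearMap.mem_ker, hsum_apply]
    exact sum_stefanMaxwellMatrix_mulVec v hcs x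
  · have hv0 : v ≠ 0 := fun h ↦ (hv ⟨0, hn⟩).ne' (congrFun h _)
    rw [hker, finrank_span_singleton hv0]
end
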